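/- arXiv:math/0703897 — 4 statements merged into one kernel-verified Lean document; each statement's English description precedes it below -/
import Mathlib

section
/- Let γ > 0 and let g : ℝ → ℝ be a bounded continuous function. If f : ℝ → ℝ is a bounded, twice continuously differentiable function satisfying f''(x) - γ f'(x) = -g(x) for all x ∈ ℝ, then its derivative is bounded, with sup-norm bound ‖f'‖ ≤ ‖g‖ / γ, where ‖·‖ denotes the supremum norm over ℝ. -/
open Filter Set

/-!
If `f' x₀ > M / γ` with `M = ⨆ u, |g u|`, then `u = f' - M / γ` satisfies `u' ≥ γ u`, so
`u e^{-γx}` is nondecreasing and `f' ≥ f' x₀ > 0` on `[x₀, ∞)`. Then `f` grows at least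
linearly, contradicting its boundedness. Applying this to `-f` gives the lower bound.
-/

open Real in
theorem mul_exp_le_of_mul_le_deriv {u u' : ℝ → ℝ} {γ a x : ℝ}
    (hu : ∀ x, HasDerivAt u (u' x) x) (h : ∀ x, γ * u x ≤ u' x) (hax : a ≤ x) :
    u a * exp (γ * (x - a)) ≤ u x := by
  -- `u e^{-γx}` has derivative `(u' - γ u) e^{-γx} ≥ 0`.
  have hmono : Monotone fun x => u x * exp (-(γ * x)) := by
    refine monotone_of_hasDerivAt_nonneg
      (fun x => (hu x).mul (((hasDerivAt_id x).const_mul γ).neg.exp)) fun x => ?_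
    have : 0 ≤ (u' x - γ * u x) * exp (-(γ * x)) :=
      mul_nonneg (sub_nonneg.mpr (h x)) (exp_pos _).le
    show 0 ≤ u' x * exp (-(γ * x)) + u x * (exp (-(γ * x)) * -(γ * 1))
    linarith
  have := mul_le_mul_of_nonneg_right (hmono hax) (exp_pos (γ * x)).le
  rwa [mul_assoc, mul_assoc, ← exp_add, ← exp_add, neg_add_cancel, exp_zero, mul_one,
    show -(γ * a) + γ * x = γ * (x - a) by ring] at this

theorem tendsto_atTop_of_pos_le_deriv {f f' : ℝ → ℝ} {a c : ℝ} (hf : ∀ x, HasDerivAt f (f' x) x)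
    (hc : 0 < c) (h : ∀ x ≥ a, c ≤ f' x) : Tendsto f atTop atTop := by
  have hlin : ∀ x ≥ a, f a + c * (x - a) ≤ f x := fun x hx => by
    have := (convex_Ici a).mul_sub_le_image_sub_of_le_deriv
      (fun y _ => (hf y).continuousAt.continuousWithinAt)
      (fun y _ => (hf y).differentiableAt.differentiableWithinAt)
      (fun y hy => (hf y).deriv ▸ h y (interior_subset hy)) a self_mem_Ici x hx hx
    linarith
  refine tendsto_atTop_mono' atTop (eventually_ge_atTop a |>.mono hlin) ?_
  exact tendsto_atTop_add_const_left _ _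
    ((tendsto_atTop_add_const_right _ _ tendsto_id).const_mul_atTop hc)

theorem le_div_of_bddAbove_of_mul_sub_le_deriv {f f' f'' : ℝ → ℝ} {γ M : ℝ}
    (hf : ∀ x, HasDerivAt f (f' x) x) (hf' : ∀ x, HasDerivAt f' (f'' x) x)
    (hbdd : BddAbove (range f)) (hγ : 0 < γ) (hM : 0 ≤ M) (h : ∀ x, γ * f' x - M ≤ f'' x)
    (x : ℝ) : f' x ≤ M / γ := by
  by_contra! hx
  have hu : ∀ y, HasDerivAt (fun y => f' y - M / γ) (f'' y) y := fun y => (hf' y).sub_const _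
  have hgrowth : ∀ y ≥ x, f' x ≤ f' y := fun y hy => by
    have := mul_exp_le_of_mul_le_deriv hu
      (fun y => by rw [mul_sub, mul_div_cancel₀ _ hγ.ne']; exact h y) hy
    nlinarith [Real.one_le_exp (mul_nonneg hγ.le (sub_nonneg.mpr hy))]
  exact not_bddAbove_of_tendsto_atTop
    (tendsto_atTop_of_pos_le_deriv hf ((div_nonneg hM hγ.le).trans_lt hx) hgrowth) hbdd

theorem stmt_0_general (γ : ℝ) (hγ : 0 < γ) (g f : ℝ → ℝ)
    (hg_bdd : ∃ C, ∀ x, |g x| ≤ C)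
    (hf_smooth : ContDiff ℝ 2 f) (hf_bdd : ∃ C, ∀ x, |f x| ≤ C)
    (hode : ∀ x, deriv (deriv f) x - γ * deriv f x = -g x) :
    ∀ x, |deriv f x| ≤ (⨆ u, |g u|) / γ := by
  obtain ⟨C, hC⟩ := hg_bdd
  obtain ⟨Cf, hCf⟩ := hf_bdd
  have hg_le : ∀ x, |g x| ≤ ⨆ u, |g u| := le_ciSup ⟨C, by rintro _ ⟨u, rfl⟩; exact hC u⟩
  have hM : 0 ≤ ⨆ u, |g u| := (abs_nonneg _).trans (hg_le 0)
  have hf : ∀ x, HasDerivAt f (deriv f x) x :=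
    fun x => (hf_smooth.differentiable two_ne_zero x).hasDerivAt
  have hf' : ∀ x, HasDerivAt (deriv f) (deriv (deriv f) x) x :=
    fun x => (hf_smooth.differentiable_deriv_two x).hasDerivAt
  intro x
  rw [abs_le, neg_le]
  constructor
  · refine le_div_of_bddAbove_of_mul_sub_le_deriv (fun x => (hf x).neg) (fun x => (hf' x).neg)
      ⟨Cf, by rintro _ ⟨y, rfl⟩; exact (neg_le_abs _).trans (hCf y)⟩ hγ hM (fun y => ?_) x
    linarith [hode y, (abs_le.mp (hg_le y)).1]
  · refine le_div_of_bddAbove_of_mul_sub_le_deriv hf hf'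
      ⟨Cf, by rintro _ ⟨y, rfl⟩; exact (le_abs_self _).trans (hCf y)⟩ hγ hM (fun y => ?_) x
    linarith [hode y, (abs_le.mp (hg_le y)).2]

theorem stmt_0 (γ : ℝ) (hγ : 0 < γ) (g f : ℝ → ℝ)
    (hg_cont : Continuous g) (hg_bdd : ∃ C, ∀ x, |g x| ≤ C)
    (hf_smooth : ContDiff ℝ 2 f) (hf_bdd : ∃ C, ∀ x, |f x| ≤ C)
    (hode : ∀ x, deriv (deriv f) x - γ * deriv f x = -g x) :
    ∀ x, |deriv f x| ≤ (⨆ u, |g u|) / γ :=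
  stmt_0_general γ hγ g f hg_bdd hf_smooth hf_bdd hode
end

section
/- Let (A_n)_{n≥1} be events such that almost surely infinitely many A_n occur, and let (B_n)_{n≥1} be mutually independent events, independent of the σ-algebra generated by (A_n)_{n≥1}, with P(B_n) ≥ c > 0 for all n. Then almost surely infinitely many of the events A_n ∩ B_n occur. -/
/-!
Let `L = limsup A`, `E = limsup (A ∩ B)` and `Gₙ = ⋂_{k ≥ n} (A_k ∩ B_k)ᶜ`, so `L \ E = ⋃ₙ (L ∩ Gₙ)`.
A point of `L ∩ Gₙ` has a first index `n + j` with `A_{n+j}` occurring; there `B_{n+j}` must fail,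
and the point lies in `T_j = (first hit at n + j) ∩ L ∩ G_{n+j+1} ⊆ L \ E`. The event `T_j` does not
involve `B_{n+j}`, so by independence `P(B_{n+j}ᶜ ∩ T_j) ≤ (1 - c) P(T_j)`; the `T_j` are disjoint,
hence `P(L ∩ Gₙ) ≤ (1 - c) P(L \ E)`. Letting `n → ∞` gives `P(L \ E) ≤ (1 - c) P(L \ E)`,
so `P(L \ E) = 0`.
-/

open Filter Set MeasureTheory ProbabilityTheory
open scoped ENNReal

theorem ENNReal.eq_zero_of_le_mul_of_lt_one {a r : ℝ≥0∞} (ha : a ≠ ∞) (hr : r < 1)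
    (h : a ≤ r * a) : a = 0 := by
  by_contra h0
  have hlt : r * a < 1 * a := ENNReal.mul_lt_mul_left h0 ha hr
  exact (h.trans_lt hlt).ne (one_mul a).symm

theorem compl_limsup_eq_iUnion_iInter {Ω : Type*} (s : ℕ → Set Ω) :
    (limsup s atTop)ᶜ = ⋃ N, ⋂ k ≥ N, (s k)ᶜ := by
  rw [limsup_compl, liminf_eq_iSup_iInf_of_nat]
  rfl

theorem monotone_biInter_ge {α : Type*} (s : ℕ → Set α) : Monotone fun N => ⋂ k ≥ N, s k :=
  fun _ _ hN => biInter_mono (fun _ hk => hN.trans hk) fun _ _ => subset_rfl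

section FirstOccurrence

variable {Ω : Type*} [MeasurableSpace Ω] {μ : Measure Ω} {A B : ℕ → Set Ω} {r : ℝ≥0∞}
  {F : ℕ → MeasurableSpace Ω}

theorem measure_limsup_inter_iInter_le (hA : ∀ n, MeasurableSet (A n))
    (hB : ∀ n, MeasurableSet (B n)) (hAF : ∀ n k, MeasurableSet[F n] (A k))
    (hBF : ∀ n k, n < k → MeasurableSet[F n] (B k))
    (hF : ∀ n T, MeasurableSet[F n] T → μ ((B n)ᶜ ∩ T) ≤ r * μ T) (N : ℕ) :
    μ (limsup A atTop ∩ ⋂ k ≥ N, (A k ∩ B k)ᶜ) ≤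
      r * μ (limsup A atTop \ limsup (fun n => A n ∩ B n) atTop) := by
  set L := limsup A atTop
  set G : ℕ → Set Ω := fun N => ⋂ k ≥ N, (A k ∩ B k)ᶜ
  set T : ℕ → Set Ω := fun j => disjointed (fun j => A (N + j)) j ∩ L ∩ G (N + j + 1)
  have hT_meas : ∀ {m : MeasurableSpace Ω} j, (∀ k, MeasurableSet[m] (A k)) →
      (∀ k, N + j < k → MeasurableSet[m] (B k)) → MeasurableSet[m] (T j) := by
    intro m j hAm hBm
    refine ((MeasurableSet.disjointed (fun i => hAm _) j).inter
      (MeasurableSet.measurableSet_limsup hAm)).inter ?_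
    exact .iInter fun k => .iInter fun hk => ((hAm k).inter (hBm k hk)).compl
  have hcover : L ∩ G N ⊆ ⋃ j, (B (N + j))ᶜ ∩ T j := by
    rintro ω ⟨hωL, hωG⟩
    have hω : ω ∈ ⋃ j, A (N + j) := by
      obtain ⟨k, hk, hωk⟩ := frequently_atTop.1 (mem_limsup_iff_frequently_mem.1 hωL) N
      exact mem_iUnion.2 ⟨k - N, by rwa [Nat.add_sub_cancel' hk]⟩
    rw [← iUnion_disjointed] at hω
    obtain ⟨j, hj⟩ := mem_iUnion.1 hω
    have hωB : ω ∉ B (N + j) := fun hωB =>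
      mem_iInter₂.1 hωG (N + j) (Nat.le_add_right N j) ⟨disjointed_subset _ j hj, hωB⟩
    exact mem_iUnion.2 ⟨j, hωB, ⟨hj, hωL⟩, monotone_biInter_ge _ (by omega : N ≤ N + j + 1) hωG⟩
  have hT_sub : (⋃ j, T j) ⊆ L \ limsup (fun n => A n ∩ B n) atTop := by
    refine iUnion_subset fun j ω hω => ⟨hω.1.2, ?_⟩
    rw [← mem_compl_iff, compl_limsup_eq_iUnion_iInter]
    exact mem_iUnion.2 ⟨_, hω.2⟩
  calc μ (L ∩ G N) ≤ μ (⋃ j, (B (N + j))ᶜ ∩ T j) := measure_mono hcover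
    _ ≤ ∑' j, μ ((B (N + j))ᶜ ∩ T j) := measure_iUnion_le _
    _ ≤ ∑' j, r * μ (T j) :=
      ENNReal.tsum_le_tsum fun j => hF _ _ (hT_meas j (hAF _) (hBF _))
    _ = r * μ (⋃ j, T j) := by
      rw [ENNReal.tsum_mul_left, measure_iUnion]
      · exact (disjoint_disjointed _).mono fun i j h =>
          h.mono (inter_subset_left.trans inter_subset_left)
            (inter_subset_left.trans inter_subset_left)
      · exact fun j => hT_meas j hA fun k _ => hB k
    _ ≤ _ := by gcongr

theorem measure_limsup_diff_limsup_inter_eq_zero [IsFiniteMeasure μ] (hr : r < 1)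
    (hA : ∀ n, MeasurableSet (A n)) (hB : ∀ n, MeasurableSet (B n))
    (hAF : ∀ n k, MeasurableSet[F n] (A k)) (hBF : ∀ n k, n < k → MeasurableSet[F n] (B k))
    (hF : ∀ n T, MeasurableSet[F n] T → μ ((B n)ᶜ ∩ T) ≤ r * μ T) :
    μ (limsup A atTop \ limsup (fun n => A n ∩ B n) atTop) = 0 := by
  refine ENNReal.eq_zero_of_le_mul_of_lt_one (measure_ne_top _ _) hr ?_
  have hmono : Monotone fun N => limsup A atTop ∩ ⋂ k ≥ N, (A k ∩ B k)ᶜ := fun _ _ hM =>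
    inter_subset_inter_right _ (monotone_biInter_ge _ hM)
  calc μ (limsup A atTop \ limsup (fun n => A n ∩ B n) atTop)
      = ⨆ N, μ (limsup A atTop ∩ ⋂ k ≥ N, (A k ∩ B k)ᶜ) := by
        rw [sdiff_eq, compl_limsup_eq_iUnion_iInter, inter_iUnion, hmono.measure_iUnion]
    _ ≤ _ := iSup_le (measure_limsup_inter_iInter_le hA hB hAF hBF hF)

end FirstOccurrence

theorem ProbabilityTheory.iIndep.measure_inter_eq_mul_of_measurableSet_biSup_compl {Ω ι : Type*}
    [MeasurableSpace Ω] {μ : Measure Ω} {m : ι → MeasurableSpace Ω}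
    (hm : ∀ i, m i ≤ ‹MeasurableSpace Ω›) (hindep : iIndep m μ) {i : ι} {s t : Set Ω}
    (hs : MeasurableSet[m i] s) (ht : MeasurableSet[⨆ j ∈ ({i}ᶜ : Set ι), m j] t) :
    μ (s ∩ t) = μ s * μ t := by
  have h := indep_biSup_compl hm hindep {i}
  exact (Indep_iff _ _ _).1 (indep_of_indep_of_le_left h (le_biSup m (mem_singleton i))) s t hs ht

theorem stmt_10 {Ω : Type*} [MeasureSpace Ω] [IsProbabilityMeasure (ℙ : Measure Ω)]
    (A B : ℕ → Set Ω) (c : ENNReal) (hc : 0 < c)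
    (hA_meas : ∀ n, MeasurableSet (A n)) (hB_meas : ∀ n, MeasurableSet (B n))
    (hA_io : ℙ (Filter.limsup A Filter.atTop) = 1)
    (hindep : iIndep
      (fun i : Option ℕ =>
        Option.elim i (MeasurableSpace.generateFrom (Set.range A))
          (fun n => MeasurableSpace.generateFrom {B n})) ℙ)
    (hBc : ∀ n, c ≤ ℙ (B n)) :
    ℙ (Filter.limsup (fun n => A n ∩ B n) Filter.atTop) = 1 := by
  set m : Option ℕ → MeasurableSpace Ω := fun i =>
    Option.elim i (MeasurableSpace.generateFrom (Set.range A))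
      (fun n => MeasurableSpace.generateFrom {B n})
  have hm : ∀ i, m i ≤ (inferInstance : MeasurableSpace Ω)
    | none => MeasurableSpace.generateFrom_le (by rintro _ ⟨n, rfl⟩; exact hA_meas n)
    | some n => MeasurableSpace.generateFrom_le (by rintro _ rfl; exact hB_meas n)
  set F : ℕ → MeasurableSpace Ω := fun n => ⨆ i ∈ ({some n}ᶜ : Set (Option ℕ)), m i
  have hAF : ∀ n k, MeasurableSet[F n] (A k) := fun n k =>
    le_biSup m (i := none) (by simp) _ (MeasurableSpace.measurableSet_generateFrom ⟨k, rfl⟩)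
  have hBF : ∀ n k, n < k → MeasurableSet[F n] (B k) := fun n k hk =>
    le_biSup m (i := some k) (by simp [hk.ne']) _ (MeasurableSpace.measurableSet_generateFrom rfl)
  have hF : ∀ n T, MeasurableSet[F n] T → ℙ ((B n)ᶜ ∩ T) ≤ (1 - c) * ℙ T := fun n T hT => by
    rw [hindep.measure_inter_eq_mul_of_measurableSet_biSup_compl hm (i := some n)
      (MeasurableSet.compl (MeasurableSpace.measurableSet_generateFrom rfl)) hT,
      prob_compl_eq_one_sub (hB_meas n)]
    gcongr
    exact hBc n
  have hr : 1 - c < 1 := ENNReal.sub_lt_self ENNReal.one_ne_top one_ne_zero hc.ne'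
  have hLE := ae_le_set.2 (measure_limsup_diff_limsup_inter_eq_zero hr hA_meas hB_meas hAF hBF hF)
  exact le_antisymm prob_le_one (hA_io ▸ measure_mono_ae hLE)
end

section
/- Let (ξ_n)_{n≥1} be i.i.d. integrable real random variables with E[ξ_1] ≤ 0 and P(ξ_1 ≠ 0) > 0, and let S_n = ξ_1 + ⋯ + ξ_n. Then liminf_{n→∞} S_n = -∞ almost surely. -/
/-!
Let `Φ t` be the probability that the walk started at `t ≥ 0` never becomes negative. It is
monotone, vanishes on `(-∞, 0)` and is harmonic on `[0, ∞)`: `Φ t = E Φ (t + ξ)`, since after the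
first step the walk starts afresh at `t + ξ`. Integrating the harmonicity relation over `[0, T]`
and swapping the integrals shows that, with `F y = ∫₀^y Φ`, the quantity `E (F (T + ξ) - F T)`
does not depend on `T ≥ 0`; letting `T → ∞` identifies it as `Φ(∞) E ξ`, so
`E F(ξ) = Φ(∞) E ξ ≤ 0`. As `F ≥ 0`, either `E ξ < 0` and `Φ(∞) = 0`, or `F(ξ) = 0` a.s., which
forces `Φ 0 = 0` as soon as `ξ ≥ ε > 0` with positive probability, and then harmonicity propagates
`Φ = 0` along `0, ε, 2ε, …`. Hence the walk is bounded below with probability `0`.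
-/

open Filter Set MeasureTheory ProbabilityTheory Topology

namespace RandomWalk

lemma exists_pos_measure_Ici_ne_zero {ν : Measure ℝ} (h : ν (Ioi 0) ≠ 0) :
    ∃ ε > 0, ν (Ici ε) ≠ 0 := by
  by_contra! hzero
  rw [← iUnion_Ici_eq_Ioi_of_lt_of_tendsto (fun n : ℕ => Nat.one_div_pos_of_nat)
    tendsto_one_div_add_atTop_nhds_zero_nat] at h
  exact h (measure_iUnion_null fun n => hzero _ Nat.one_div_pos_of_nat)

lemma integral_id_neg_of_measure_Ioi_eq_zero {ν : Measure ℝ} (hint : Integrable id ν)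
    (hpos : ν (Ioi 0) = 0) (hnondeg : ν {0}ᶜ ≠ 0) : ∫ a, a ∂ν < 0 := by
  have hnonpos : 0 ≤ᵐ[ν] fun a => -a := by
    filter_upwards [measure_eq_zero_iff_ae_notMem.mp hpos] with a ha
    simpa using ha
  have hsupport : Function.support (fun a : ℝ => -a) = {0}ᶜ := by ext; simp
  have := (integral_pos_iff_support_of_nonneg_ae hnonpos hint.neg).mpr
    (by rwa [hsupport, pos_iff_ne_zero])
  rwa [integral_neg, neg_pos] at this

section Harmonic

variable {Φ : ℝ → ℝ}

lemma nonneg_of_monotone_of_neg (hmono : Monotone Φ) (hneg : ∀ t < 0, Φ t = 0) (t : ℝ) :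
    0 ≤ Φ t := by
  simpa [hneg (min t (-1)) (by simp)] using hmono (min_le_left t (-1))

lemma norm_le_iSup_of_monotone (hmono : Monotone Φ) (hneg : ∀ t < 0, Φ t = 0)
    (hbdd : BddAbove (range Φ)) (t : ℝ) : ‖Φ t‖ ≤ ⨆ s, Φ s := by
  rw [Real.norm_of_nonneg (nonneg_of_monotone_of_neg hmono hneg t)]
  exact le_ciSup hbdd t

lemma intervalIntegral_nonneg_of_monotone (hmono : Monotone Φ) (hneg : ∀ t < 0, Φ t = 0)
    (y : ℝ) : 0 ≤ ∫ t in 0..y, Φ t := by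
  rcases le_or_gt 0 y with hy | hy
  · exact intervalIntegral.integral_nonneg hy fun t _ => nonneg_of_monotone_of_neg hmono hneg t
  · rw [intervalIntegral.integral_symm, intervalIntegral.integral_of_le hy.le,
      integral_Ioc_eq_integral_Ioo, setIntegral_eq_zero_of_forall_eq_zero fun t ht => hneg t ht.2,
      neg_zero]

lemma abs_intervalIntegral_le_iSup_mul (hmono : Monotone Φ) (hneg : ∀ t < 0, Φ t = 0)
    (hbdd : BddAbove (range Φ)) (y z : ℝ) :
    |∫ t in y..z, Φ t| ≤ (⨆ s, Φ s) * |z - y| :=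
  intervalIntegral.norm_integral_le_of_norm_le_const fun t _ =>
    norm_le_iSup_of_monotone hmono hneg hbdd t

lemma integrable_intervalIntegral_add (hmono : Monotone Φ) (hneg : ∀ t < 0, Φ t = 0)
    (hbdd : BddAbove (range Φ)) {ν : Measure ℝ} (hint : Integrable id ν) (u : ℝ) :
    Integrable (fun a => ∫ t in u..u + a, Φ t) ν := by
  refine Integrable.mono' (hint.norm.const_mul (⨆ s, Φ s)) ?_ (Eventually.of_forall fun a => ?_)
  · exact ((intervalIntegral.continuous_primitive (fun _ _ => hmono.intervalIntegrable) u).comp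
      (continuous_const_add u)).aestronglyMeasurable
  · simpa using abs_intervalIntegral_le_iSup_mul hmono hneg hbdd u (u + a)

variable {ν : Measure ℝ} [IsProbabilityMeasure ν]

lemma integral_intervalIntegral_self_add_of_harmonic (hmono : Monotone Φ) (hneg : ∀ t < 0, Φ t = 0)
    (hbdd : BddAbove (range Φ))
    (hharm : ∀ t, 0 ≤ t → Φ t = ∫ a, Φ (t + a) ∂ν) {T : ℝ} (hT : 0 ≤ T) :
    ∫ a, (∫ t in a..T + a, Φ t) ∂ν = ∫ t in 0..T, Φ t := by
  have hswap : Integrable (Function.uncurry fun t a => Φ (t + a))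
      ((volume.restrict (Ioc 0 T)).prod ν) :=
    .of_bound (hmono.measurable.comp measurable_add).aestronglyMeasurable _
      (Eventually.of_forall fun _ => norm_le_iSup_of_monotone hmono hneg hbdd _)
  calc ∫ a, (∫ t in a..T + a, Φ t) ∂ν = ∫ a, (∫ t in 0..T, Φ (t + a)) ∂ν := by
        simp [intervalIntegral.integral_comp_add_right]
    _ = ∫ t in 0..T, (∫ a, Φ (t + a) ∂ν) := by
        simp only [intervalIntegral.integral_of_le hT]
        exact (integral_integral_swap hswap).symm
    _ = ∫ t in 0..T, Φ t := by
        refine intervalIntegral.integral_congr fun t ht => (hharm t ?_).symm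
        rw [uIcc_of_le hT] at ht
        exact ht.1

lemma integral_intervalIntegral_const_add_of_harmonic (hmono : Monotone Φ) (hneg : ∀ t < 0, Φ t = 0)
    (hbdd : BddAbove (range Φ)) (hint : Integrable id ν)
    (hharm : ∀ t, 0 ≤ t → Φ t = ∫ a, Φ (t + a) ∂ν) {T : ℝ} (hT : 0 ≤ T) :
    ∫ a, (∫ t in T..T + a, Φ t) ∂ν = ∫ a, (∫ t in 0..a, Φ t) ∂ν := by
  have hadd : ∀ y z w, (∫ t in y..z, Φ t) + ∫ t in z..w, Φ t = ∫ t in y..w, Φ t := fun _ _ _ =>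
    intervalIntegral.integral_add_adjacent_intervals hmono.intervalIntegrable
      hmono.intervalIntegrable
  have hcocycle : ∀ a, (∫ t in T..T + a, Φ t) - (∫ t in 0..a, Φ t)
      = (∫ t in a..T + a, Φ t) - ∫ t in 0..T, Φ t := fun a => by
    linarith [hadd 0 a (T + a), hadd 0 T (T + a)]
  have hshift := integrable_intervalIntegral_add hmono hneg hbdd hint T
  have hzero : Integrable (fun a => ∫ t in 0..a, Φ t) ν := by
    simpa using integrable_intervalIntegral_add hmono hneg hbdd hint 0
  have hfubini : Integrable (fun a => ∫ t in a..T + a, Φ t) ν := by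
    refine ((hshift.sub hzero).add (integrable_const (∫ t in 0..T, Φ t))).congr
      (Eventually.of_forall fun a => ?_)
    simp only [Pi.add_apply, Pi.sub_apply, hcocycle, sub_add_cancel]
  rw [← sub_eq_zero, ← integral_sub hshift hzero, integral_congr_ae (Eventually.of_forall hcocycle),
    integral_sub hfubini (integrable_const _),
    integral_intervalIntegral_self_add_of_harmonic hmono hneg hbdd hharm hT]
  simp

lemma tendsto_intervalIntegral_add (hmono : Monotone Φ) (hneg : ∀ t < 0, Φ t = 0)
    (hbdd : BddAbove (range Φ)) (a : ℝ) :
    Tendsto (fun T => ∫ t in T..T + a, Φ t) atTop (𝓝 ((⨆ s, Φ s) * a)) := by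
  have hlim : ∀ s, Tendsto (fun T => Φ (T + s)) atTop (𝓝 (⨆ s, Φ s)) := fun s =>
    (tendsto_atTop_ciSup hmono hbdd).comp (tendsto_atTop_add_const_right _ s tendsto_id)
  have h := intervalIntegral.tendsto_integral_filter_of_dominated_convergence (a := 0) (b := a)
    (μ := volume) (fun _ => ⨆ s, Φ s)
    (Eventually.of_forall fun T =>
      (hmono.measurable.comp (measurable_const_add T)).aestronglyMeasurable)
    (Eventually.of_forall fun T => Eventually.of_forall fun s _ =>
      norm_le_iSup_of_monotone hmono hneg hbdd (T + s))
    intervalIntegrable_const (Eventually.of_forall fun s _ => hlim s)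
  simpa [intervalIntegral.integral_comp_add_left, mul_comm] using h

lemma integral_intervalIntegral_eq_iSup_mul (hmono : Monotone Φ) (hneg : ∀ t < 0, Φ t = 0)
    (hbdd : BddAbove (range Φ)) (hint : Integrable id ν)
    (hharm : ∀ t, 0 ≤ t → Φ t = ∫ a, Φ (t + a) ∂ν) :
    ∫ a, (∫ t in 0..a, Φ t) ∂ν = (⨆ s, Φ s) * ∫ a, a ∂ν := by
  have h := tendsto_integral_filter_of_dominated_convergence (l := atTop)
    (F := fun T a => ∫ t in T..T + a, Φ t) (fun a => (⨆ s, Φ s) * ‖a‖)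
    (Eventually.of_forall fun T => (integrable_intervalIntegral_add hmono hneg hbdd hint T).1)
    (Eventually.of_forall fun T => Eventually.of_forall fun a => by
      simpa using abs_intervalIntegral_le_iSup_mul hmono hneg hbdd T (T + a))
    (hint.norm.const_mul _)
    (Eventually.of_forall (tendsto_intervalIntegral_add hmono hneg hbdd))
  rw [integral_const_mul] at h
  refine tendsto_nhds_unique tendsto_const_nhds (h.congr' ?_)
  filter_upwards [eventually_ge_atTop 0] with T hT
  exact integral_intervalIntegral_const_add_of_harmonic hmono hneg hbdd hint hharm hT

lemma integrable_comp_const_add (hmono : Monotone Φ) (hneg : ∀ t < 0, Φ t = 0)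
    (hbdd : BddAbove (range Φ)) (t : ℝ) : Integrable (fun a => Φ (t + a)) ν :=
  .of_bound (hmono.measurable.comp (measurable_const_add t)).aestronglyMeasurable _
    (Eventually.of_forall fun a => norm_le_iSup_of_monotone hmono hneg hbdd (t + a))

lemma measureReal_Ici_mul_le_of_harmonic (hmono : Monotone Φ) (hneg : ∀ t < 0, Φ t = 0)
    (hbdd : BddAbove (range Φ)) (hharm : ∀ t, 0 ≤ t → Φ t = ∫ a, Φ (t + a) ∂ν)
    {t : ℝ} (ht : 0 ≤ t) (ε : ℝ) : ν.real (Ici ε) * Φ (t + ε) ≤ Φ t := by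
  have hint := integrable_comp_const_add (ν := ν) hmono hneg hbdd t
  calc ν.real (Ici ε) * Φ (t + ε) = ∫ _ in Ici ε, Φ (t + ε) ∂ν := by
        rw [setIntegral_const, smul_eq_mul]
    _ ≤ ∫ a in Ici ε, Φ (t + a) ∂ν :=
        setIntegral_mono_on (integrableOn_const (measure_ne_top _ _)) hint.integrableOn
          measurableSet_Ici fun a ha => hmono (by simpa using ha)
    _ ≤ Φ t := (hharm t ht).symm ▸ setIntegral_le_integral hint
        (Eventually.of_forall fun a => nonneg_of_monotone_of_neg hmono hneg (t + a))

lemma apply_zero_eq_zero_of_intervalIntegral_eq_zero (hmono : Monotone Φ)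
    (hneg : ∀ t < 0, Φ t = 0) {a : ℝ} (ha : 0 < a) (h : ∫ t in 0..a, Φ t = 0) : Φ 0 = 0 := by
  have hlower : a * Φ 0 ≤ ∫ t in 0..a, Φ t := by
    simpa using intervalIntegral.integral_mono_on (μ := volume) ha.le intervalIntegrable_const
      hmono.intervalIntegrable fun t ht => hmono ht.1
  nlinarith [nonneg_of_monotone_of_neg hmono hneg 0]

lemma eq_zero_of_harmonic_of_apply_zero (hmono : Monotone Φ) (hneg : ∀ t < 0, Φ t = 0)
    (hbdd : BddAbove (range Φ)) (hharm : ∀ t, 0 ≤ t → Φ t = ∫ a, Φ (t + a) ∂ν)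
    {ε : ℝ} (hε : 0 < ε) (hνε : ν (Ici ε) ≠ 0) (h0 : Φ 0 = 0) (t : ℝ) : Φ t = 0 := by
  have hνpos : 0 < ν.real (Ici ε) := ENNReal.toReal_pos hνε (measure_ne_top _ _)
  have hmul : ∀ k : ℕ, Φ (k * ε) = 0 := by
    intro k
    induction k with
    | zero => simpa using h0
    | succ k ih =>
      have := measureReal_Ici_mul_le_of_harmonic hmono hneg hbdd hharm
        (by positivity : 0 ≤ k * ε) ε
      rw [ih] at this
      rw [Nat.cast_succ, add_mul, one_mul]
      nlinarith [nonneg_of_monotone_of_neg hmono hneg (k * ε + ε)]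
  obtain ⟨k, hk⟩ := exists_nat_ge (t / ε)
  refine le_antisymm ?_ (nonneg_of_monotone_of_neg hmono hneg t)
  calc Φ t ≤ Φ (k * ε) := hmono (by rwa [div_le_iff₀ hε] at hk)
    _ = 0 := hmul k

end Harmonic

theorem eq_zero_of_harmonic {Φ : ℝ → ℝ} {ν : Measure ℝ} [IsProbabilityMeasure ν]
    (hmono : Monotone Φ) (hneg : ∀ t < 0, Φ t = 0) (hbdd : BddAbove (range Φ))
    (hint : Integrable id ν) (hmean : ∫ a, a ∂ν ≤ 0) (hnondeg : ν {0}ᶜ ≠ 0)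
    (hharm : ∀ t, 0 ≤ t → Φ t = ∫ a, Φ (t + a) ∂ν) (t : ℝ) : Φ t = 0 := by
  have hsup : 0 ≤ ⨆ s, Φ s := (nonneg_of_monotone_of_neg hmono hneg 0).trans (le_ciSup hbdd 0)
  have hprim : 0 ≤ fun y => ∫ s in 0..y, Φ s := intervalIntegral_nonneg_of_monotone hmono hneg
  have hidentity := integral_intervalIntegral_eq_iSup_mul hmono hneg hbdd hint hharm
  by_cases hpos : ν (Ioi 0) = 0
  · have hmean_neg := integral_id_neg_of_measure_Ioi_eq_zero hint hpos hnondeg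
    have hsup_zero : (⨆ s, Φ s) = 0 := by nlinarith [integral_nonneg (μ := ν) hprim]
    exact le_antisymm (hsup_zero ▸ le_ciSup hbdd t) (nonneg_of_monotone_of_neg hmono hneg t)
  obtain ⟨ε, hε, hνε⟩ := exists_pos_measure_Ici_ne_zero hpos
  have hprim_ae : (fun a => ∫ s in 0..a, Φ s) =ᵐ[ν] 0 := by
    refine (integral_eq_zero_iff_of_nonneg hprim ?_).mp ?_
    · simpa using integrable_intervalIntegral_add hmono hneg hbdd hint 0
    · exact le_antisymm (hidentity ▸ mul_nonpos_of_nonneg_of_nonpos hsup hmean)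
        (integral_nonneg hprim)
  obtain ⟨a, ha, hprim_a⟩ :=
    Measure.exists_mem_of_measure_ne_zero_of_ae hνε (ae_restrict_of_ae hprim_ae)
  exact eq_zero_of_harmonic_of_apply_zero hmono hneg hbdd hharm hε hνε
    (apply_zero_eq_zero_of_intervalIntegral_eq_zero hmono hneg (hε.trans_le ha) hprim_a) t

lemma indepFun_head_tail {Ω β : Type*} [MeasurableSpace Ω] [MeasurableSpace β]
    {μ : Measure Ω} {ξ : ℕ → Ω → β} (hmeas : ∀ n, Measurable (ξ n)) (hindep : iIndepFun ξ μ) :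
    IndepFun (ξ 0) (fun ω n => ξ (n + 1) ω) μ := by
  rw [IndepFun_iff_Indep]
  have h := indep_iSup_of_disjoint (fun n => (hmeas n).comap_le) hindep.iIndep
    (S := {0}) (T := Ioi 0) (by simp)
  refine indep_of_indep_of_le_right (indep_of_indep_of_le_left h ?_) ?_
  · exact le_iSup₂ (f := fun n (_ : n ∈ ({0} : Set ℕ)) => MeasurableSpace.comap (ξ n) _) 0 rfl
  · refine Measurable.comap_le
      (@measurable_pi_lambda _ _ _ (⨆ n ∈ Ioi 0, MeasurableSpace.comap (ξ n) _) _ _ fun n =>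
        Measurable.of_comap_le ?_)
    exact le_iSup₂ (f := fun n (_ : n ∈ Ioi 0) => MeasurableSpace.comap (ξ n) _) (n + 1)
      n.succ_pos

lemma map_tail_eq_map {Ω β : Type*} [MeasurableSpace Ω] [MeasurableSpace β]
    {μ : Measure Ω} {ξ : ℕ → Ω → β} (hmeas : ∀ n, Measurable (ξ n)) (hindep : iIndepFun ξ μ)
    (hident : ∀ n, μ.map (ξ n) = μ.map (ξ 0)) :
    μ.map (fun ω n => ξ (n + 1) ω) = μ.map (fun ω n => ξ n ω) := by
  rw [(hindep.precomp Nat.succ_injective).map_fun_eq_infinitePi_map fun n => hmeas _,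
    hindep.map_fun_eq_infinitePi_map hmeas]
  simp only [hident]

def survivalSet (t : ℝ) : Set (ℕ → ℝ) := {x | ∀ n, 0 ≤ t + ∑ i ∈ Finset.range n, x i}

lemma measurableSet_survivalSet (t : ℝ) : MeasurableSet (survivalSet t) := by
  simp only [survivalSet, ofPred_forall]
  exact .iInter fun n => measurableSet_le measurable_const (by fun_prop)

lemma survivalSet_mono : Monotone survivalSet := fun _ _ hst _ hx n => by
  linarith [hx n]

lemma survivalSet_of_neg {t : ℝ} (ht : t < 0) : survivalSet t = ∅ :=
  eq_empty_of_forall_notMem fun _ hx => ht.not_ge (by simpa using hx 0)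

lemma mem_survivalSet_iff_tail {t : ℝ} (ht : 0 ≤ t) (x : ℕ → ℝ) :
    x ∈ survivalSet t ↔ (fun n => x (n + 1)) ∈ survivalSet (t + x 0) := by
  refine ⟨fun hx n => ?_, fun hx n => ?_⟩
  · simpa [Finset.sum_range_succ', add_assoc, add_comm (x 0)] using hx (n + 1)
  · cases n with
    | zero => simpa using ht
    | succ n => simpa [Finset.sum_range_succ', add_assoc, add_comm (x 0)] using hx n

lemma frequently_sum_lt_of_forall_notMem {x : ℕ → ℝ} (hx : ∀ m : ℕ, x ∉ survivalSet m) (M : ℝ) :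
    ∃ᶠ n in atTop, ∑ i ∈ Finset.range n, x i < -M := by
  by_contra! h
  obtain ⟨b, hb⟩ := (isBoundedUnder_of_eventually_ge h).bddBelow_range
  obtain ⟨m, hm⟩ := exists_nat_ge (-b)
  exact hx m fun n => by linarith [hb (mem_range_self n)]

lemma map_survivalSet_eq_lintegral {Ω : Type*} [MeasurableSpace Ω] {μ : Measure Ω}
    [IsProbabilityMeasure μ] {ξ : ℕ → Ω → ℝ} (hmeas : ∀ n, Measurable (ξ n))
    (hindep : iIndepFun ξ μ) (hident : ∀ n, μ.map (ξ n) = μ.map (ξ 0)) {t : ℝ} (ht : 0 ≤ t) :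
    μ.map (fun ω n => ξ n ω) (survivalSet t)
      = ∫⁻ a, μ.map (fun ω n => ξ n ω) (survivalSet (t + a)) ∂(μ.map (ξ 0)) := by
  set B := {p : ℝ × (ℕ → ℝ) | p.2 ∈ survivalSet (t + p.1)}
  have hB : MeasurableSet B := by
    have hBeq : B = ⋂ n, {p | 0 ≤ t + p.1 + ∑ i ∈ Finset.range n, p.2 i} := by
      ext; simp [B, survivalSet]
    rw [hBeq]
    exact .iInter fun n => measurableSet_le measurable_const (by fun_prop)
  have htail : Measurable fun ω n => ξ (n + 1) ω := measurable_pi_lambda _ fun n => hmeas _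
  have hpre : (fun ω n => ξ n ω) ⁻¹' survivalSet t
      = (fun ω => (ξ 0 ω, fun n => ξ (n + 1) ω)) ⁻¹' B := by
    ext ω
    exact mem_survivalSet_iff_tail ht _
  rw [Measure.map_apply (measurable_pi_lambda _ hmeas) (measurableSet_survivalSet t), hpre,
    ← Measure.map_apply ((hmeas 0).prodMk htail) hB,
    (indepFun_iff_map_prod_eq_prod_map_map (hmeas 0).aemeasurable htail.aemeasurable).mp
      (indepFun_head_tail hmeas hindep),
    Measure.prod_apply hB, map_tail_eq_map hmeas hindep hident]
  rfl

lemma map_survivalSet_eq_zero {Ω : Type*} [MeasurableSpace Ω] {μ : Measure Ω}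
    [IsProbabilityMeasure μ] {ξ : ℕ → Ω → ℝ} (hmeas : ∀ n, Measurable (ξ n))
    (hindep : iIndepFun ξ μ) (hident : ∀ n, μ.map (ξ n) = μ.map (ξ 0))
    (hint : Integrable (ξ 0) μ) (hmean : ∫ ω, ξ 0 ω ∂μ ≤ 0) (hnondeg : 0 < μ {ω | ξ 0 ω ≠ 0})
    (t : ℝ) : μ.map (fun ω n => ξ n ω) (survivalSet t) = 0 := by
  have hX : Measurable fun ω n => ξ n ω := measurable_pi_lambda _ hmeas
  have := Measure.isProbabilityMeasure_map (μ := μ) (hmeas 0).aemeasurable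
  have := Measure.isProbabilityMeasure_map (μ := μ) hX.aemeasurable
  have hΦ := eq_zero_of_harmonic (ν := μ.map (ξ 0))
    (Φ := fun t => (μ.map fun ω n => ξ n ω).real (survivalSet t))
    (fun s t hst => measureReal_mono (survivalSet_mono hst))
    (fun t ht => by simp [survivalSet_of_neg ht])
    ⟨1, by rintro _ ⟨t, rfl⟩; exact measureReal_le_one⟩
    ((integrable_map_measure aestronglyMeasurable_id (hmeas 0).aemeasurable).mpr hint)
    (by rwa [integral_map (f := fun a => a) (hmeas 0).aemeasurable aestronglyMeasurable_id])
    (by rw [Measure.map_apply (hmeas 0) (measurableSet_singleton 0).compl]; exact hnondeg.ne')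
    (fun t ht => by
      simp only [measureReal_def]
      have hmono : Monotone fun a => μ.map (fun ω n => ξ n ω) (survivalSet (t + a)) :=
        fun a b hab => measure_mono (survivalSet_mono (add_le_add_right hab t))
      rw [integral_toReal hmono.measurable.aemeasurable
        (Eventually.of_forall fun _ => measure_lt_top _ _),
        ← map_survivalSet_eq_lintegral hmeas hindep hident ht])
  exact (measureReal_eq_zero_iff (measure_ne_top _ _)).mp (hΦ t)

end RandomWalk

open RandomWalk in
theorem stmt_12 {Ω : Type*} [MeasureSpace Ω] [IsProbabilityMeasure (ℙ : Measure Ω)]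
    (ξ : ℕ → Ω → ℝ) (hmeas : ∀ n, Measurable (ξ n))
    (hindep : iIndepFun ξ ℙ)
    (hident : ∀ n, Measure.map (ξ n) ℙ = Measure.map (ξ 0) ℙ)
    (hint : Integrable (ξ 0) ℙ)
    (hmean : ∫ ω, ξ 0 ω ≤ 0)
    (hnondeg : 0 < ℙ {ω | ξ 0 ω ≠ 0}) :
    ∀ᵐ ω ∂(ℙ : Measure Ω),
      ∀ M : ℝ, ∃ᶠ n in atTop, (∑ i ∈ Finset.range n, ξ i ω) < -M := by
  have hnull : ∀ m : ℕ, ℙ ((fun ω n => ξ n ω) ⁻¹' survivalSet m) = 0 := fun m => by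
    rw [← Measure.map_apply (measurable_pi_lambda _ hmeas) (measurableSet_survivalSet _)]
    exact map_survivalSet_eq_zero hmeas hindep hident hint hmean hnondeg m
  filter_upwards [ae_all_iff.mpr fun m => measure_eq_zero_iff_ae_notMem.mp (hnull m)] with ω hω
  exact frequently_sum_lt_of_forall_notMem hω
end

section
/- Let γ > 0, let g : ℝ → ℝ be bounded and continuous, and let f : ℝ → ℝ be a bounded C² function with f''(x) - γ f'(x) = -g(x) for all x. Then f'(x) = ∫₀^∞ g(u + x) e^{-γu} du for all x ∈ ℝ; i.e., in the general solution f'(x) = ∫₀^∞ g(u+x) e^{-γu} du + C e^{γx} of this first-order linear ODE for f', boundedness of f forces the constant C to be zero. -/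
/-!
`F x = exp (-γ x) f' x` satisfies `F' = -g(x) exp (-γ x)`, which is integrable on `(x, ∞)`, so
`F` has a limit `L` at `+∞` and `F x = L + ∫_x^∞ g(t) exp (-γ t) dt`. If `L ≠ 0` then
`|f'| ≈ |L| exp (γ x) → ∞`, which the mean value theorem on `[T, T + 1]` forbids for bounded `f`.
Hence `L = 0`, and translating the integral gives the formula.
-/

open Filter Set MeasureTheory Topology

theorem not_tendsto_abs_deriv_atTop_of_bounded {f : ℝ → ℝ} (hf : Differentiable ℝ f) {C : ℝ}
    (hC : ∀ x, |f x| ≤ C) : ¬Tendsto (fun x => |deriv f x|) atTop atTop := by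
  intro h
  obtain ⟨T, hT⟩ := (h.eventually_gt_atTop (2 * C)).exists_forall_of_atTop
  obtain ⟨c, hc, hslope⟩ :=
    exists_deriv_eq_slope f (lt_add_one T) hf.continuous.continuousOn hf.differentiableOn
  have hc_le : |deriv f c| ≤ 2 * C := by
    rw [hslope, add_sub_cancel_left, div_one]
    linarith [abs_sub (f (T + 1)) (f T), hC (T + 1), hC T]
  linarith [hT c hc.1.le]

theorem eq_zero_of_tendsto_exp_neg_mul_deriv {f : ℝ → ℝ} (hf : Differentiable ℝ f)
    {C : ℝ} (hC : ∀ x, |f x| ≤ C) {γ L : ℝ} (hγ : 0 < γ)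
    (hL : Tendsto (fun x => Real.exp (-γ * x) * deriv f x) atTop (𝓝 L)) : L = 0 := by
  by_contra hL0
  refine not_tendsto_abs_deriv_atTop_of_bounded hf hC ?_
  have hexp : Tendsto (fun x => Real.exp (γ * x)) atTop atTop :=
    Real.tendsto_exp_atTop.comp (tendsto_id.const_mul_atTop hγ)
  refine (Tendsto.pos_mul_atTop (abs_pos.2 hL0) hL.abs hexp).congr fun x => ?_
  rw [abs_mul, Real.abs_exp, mul_comm, ← mul_assoc, ← Real.exp_add]
  simp

theorem integrableOn_Ioi_mul_exp_neg_mul {g : ℝ → ℝ} (hg : AEStronglyMeasurable g)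
    {C : ℝ} (hC : ∀ x, |g x| ≤ C) {γ : ℝ} (hγ : 0 < γ) (a : ℝ) :
    IntegrableOn (fun t => g t * Real.exp (-γ * t)) (Ioi a) := by
  refine ((exp_neg_integrableOn_Ioi a hγ).const_mul C).mono'
    (hg.mul (by fun_prop)).restrict (Eventually.of_forall fun t => ?_)
  rw [Real.norm_eq_abs, abs_mul, Real.abs_exp]
  exact mul_le_mul_of_nonneg_right (hC t) (Real.exp_pos _).le

theorem hasDerivAt_exp_neg_mul_mul {h : ℝ → ℝ} {γ b x : ℝ}
    (hh : HasDerivAt h (γ * h x - b) x) :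
    HasDerivAt (fun y => Real.exp (-γ * y) * h y) (-(b * Real.exp (-γ * x))) x := by
  have hexp : HasDerivAt (fun y => Real.exp (-γ * y)) (Real.exp (-γ * x) * -γ) x := by
    simpa using ((hasDerivAt_id x).const_mul (-γ)).exp
  exact (hexp.mul hh).congr_deriv (by ring)

theorem integral_Ioi_zero_comp_add_mul_exp_neg_mul (g : ℝ → ℝ) (γ x : ℝ) :
    ∫ u in Ioi (0 : ℝ), g (u + x) * Real.exp (-γ * u) =
      Real.exp (γ * x) * ∫ t in Ioi x, g t * Real.exp (-γ * t) := by
  have hshift := (measurePreserving_add_right volume x).setIntegral_preimage_emb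
    (measurableEmbedding_addRight x) (fun t => g t * Real.exp (-γ * t)) (Ioi x)
  rw [preimage_add_const_Ioi, sub_self] at hshift
  rw [← hshift, ← integral_const_mul]
  refine setIntegral_congr_fun measurableSet_Ioi fun u _ => ?_
  rw [mul_left_comm, ← Real.exp_add]
  ring_nf

theorem stmt_19 (γ : ℝ) (hγ : 0 < γ) (g f : ℝ → ℝ)
    (hg_cont : Continuous g) (hg_bdd : ∃ C, ∀ x, |g x| ≤ C)
    (hf_smooth : ContDiff ℝ 2 f) (hf_bdd : ∃ C, ∀ x, |f x| ≤ C)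
    (hode : ∀ x, deriv (deriv f) x - γ * deriv f x = -g x) :
    ∀ x : ℝ, deriv f x = ∫ u in Set.Ioi (0:ℝ), g (u + x) * Real.exp (-γ * u) := by
  obtain ⟨Cg, hCg⟩ := hg_bdd
  obtain ⟨Cf, hCf⟩ := hf_bdd
  have hf : Differentiable ℝ f := hf_smooth.differentiable two_ne_zero
  have hf' : Differentiable ℝ (deriv f) := (hf_smooth.deriv' (n := 1)).differentiable one_ne_zero
  set F := fun y => Real.exp (-γ * y) * deriv f y
  have hF : ∀ y, HasDerivAt F (-(g y * Real.exp (-γ * y))) y := fun y =>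
    hasDerivAt_exp_neg_mul_mul <| (hf' y).hasDerivAt.congr_deriv (by linarith [hode y])
  have hint := integrableOn_Ioi_mul_exp_neg_mul hg_cont.aestronglyMeasurable hCg hγ
  have hlim := tendsto_limUnder_of_hasDerivAt_of_integrableOn_Ioi (fun y _ => hF y) (hint 0).neg
  rw [eq_zero_of_tendsto_exp_neg_mul_deriv hf hCf hγ hlim] at hlim
  intro x
  have hF_eq_integral := integral_Ioi_of_hasDerivAt_of_tendsto (hF x).continuousAt.continuousWithinAt
    (fun y _ => hF y) (hint x).neg hlim
  rw [integral_neg, zero_sub, neg_inj] at hF_eq_integral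
  rw [integral_Ioi_zero_comp_add_mul_exp_neg_mul, hF_eq_integral, ← mul_assoc, ← Real.exp_add]
  simp
end
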